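/- Let X be a simplicial set, G a simplicial group, and τ : X_{>0} → G a twisting function. Let n ≥ 1, 0 ≤ p ≤ n, x ∈ X_n, i ∈ S_n, and set (j, q) = Φ(i, p). Then Sz_i(s_p x) = s_q(Sz_j x) in G_n. -/

import Mathlib

open CategoryTheory

/-- `memS n l i` means `i ∈ S_{n,l}`: a sequence of length `l` with
`0 ≤ i_s ≤ n - s` for `1 ≤ s ≤ l` (here `i.getD t 0` is the entry `i_{t+1}`). -/
def memS (n l : ℕ) (i : List ℕ) : Prop :=
  i.length = l ∧ ∀ t < l, i.getD t 0 + t + 1 ≤ n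

/-- The ordered set remaining from `{0, …, n}` after performing the first `r`
removal steps prescribed by `i`: at each step the element at (0-indexed)
position `i_r + 1` of the remaining set is removed. -/
def restAfter (n : ℕ) (i : List ℕ) (r : ℕ) : List ℕ :=
  (i.take r).foldl (fun L a => L.eraseIdx (a + 1)) (List.range (n + 1))

/-- The ordered set remaining from `{0, …, n}` after the whole removal
procedure prescribed by `i`. -/
def restList (n : ℕ) (i : List ℕ) : List ℕ := restAfter n i i.length

/-- The element `e_{r+1}` removed at (0-indexed) step `r` of the removal
procedure on `{0, …, n}` prescribed by `i`. -/
def elemRemoved (n : ℕ) (i : List ℕ) (r : ℕ) : ℕ :=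
  (restAfter n i r).getD (i.getD r 0 + 1) 0

/-- The component `α_s` of `Ψ_p(i)`, for the interval `(a, b) = (p_{s-1}, p_s)`:
the set of (0-indexed) steps at which an element strictly between `a` and `b`
is removed. -/
def psiAlpha (n : ℕ) (i : List ℕ) (a b : ℕ) : Finset ℕ :=
  (Finset.range i.length).filter
    (fun r => a < elemRemoved n i r ∧ elemRemoved n i r < b)

/-- The component `j_s` of `Ψ_p(i)`, for the interval `(a, b) = (p_{s-1}, p_s)`:
its `u`-th entry is `w - 1` where the `u`-th element of `(a, b)` to be removed
is, at the moment of its removal, the `w`-th smallest element of `(a, b)` still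
present. -/
def psiJ (n : ℕ) (i : List ℕ) (a b : ℕ) : List ℕ :=
  ((List.range i.length).filter
      (fun r => decide (a < elemRemoved n i r ∧ elemRemoved n i r < b))).map
    (fun r => ((restAfter n i r).filter
      (fun y => decide (a < y ∧ y < elemRemoved n i r))).length)

/-- `α` is a `(q_0, …, q_{k-1})`-shuffle: an ordered partition of
`{0, …, q_0 + ⋯ + q_{k-1} - 1}` with `|α_s| = q_s`. -/
def IsShuffleF {k : ℕ} (q : Fin k → ℕ) (α : Fin k → Finset ℕ) : Prop :=
  (∀ s, (α s).card = q s) ∧ (∀ s t, s ≠ t → Disjoint (α s) (α t)) ∧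
    Finset.univ.biUnion α = Finset.range (∑ s, q s)

/-- The sign exponent `(α)` of a shuffle: the number of pairs `(a, b)` with
`a ∈ α_s`, `b ∈ α_t`, `s < t` and `a > b`. -/
def shuffleExpN (k : ℕ) (α : ℕ → Finset ℕ) : ℕ :=
  ∑ s ∈ Finset.range k, ∑ t ∈ Finset.range k,
    if s < t then ∑ a ∈ α s, ((α t).filter (fun b => b < a)).card else 0

/-- Vertex map of the derived operator. -/
def derivedFun (f : ℕ → ℕ) : ℕ → ℕ := fun t => if t = 0 then 0 else f (t - 1) + 1

/-- Vertex map of the face map `δ_j`. -/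
def deltaFun (j : ℕ) : ℕ → ℕ := fun t => if t < j then t else t + 1

/-- Vertex map of the degeneracy map `σ_j`. -/
def sigmaFun (j : ℕ) : ℕ → ℕ := fun t => if t ≤ j then t else t - 1

/-- Vertex map of the Szczarba operator `D_i^k`. -/
def DFun : List ℕ → ℕ → ℕ → ℕ
  | [], _ => id
  | (i1 :: i'), k =>
    if k < i1 then deltaFun (i1 - k) ∘ sigmaFun 0 ∘ derivedFun (DFun i' k)
    else if k = i1 then derivedFun (DFun i' k)
    else sigmaFun 0 ∘ derivedFun (DFun i' (k - 1))

/-- The morphism `[b] ⟶ [a]` in the simplex category whose vertex map is (the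
monotone clamped version of) `f`.  When `f` is monotone and maps `[b]` into `[a]`
this is exactly the morphism with vertex map `f`. -/
def mkHomF (a b : ℕ) (f : ℕ → ℕ) : (SimplexCategory.mk b ⟶ SimplexCategory.mk a) :=
  SimplexCategory.mkHom
    { toFun := fun t => ⟨min ((Finset.range (t.1 + 1)).sup f) a,
        Nat.lt_succ_of_le (min_le_right _ _)⟩
      monotone' := fun u v huv => by
        simp only [Fin.mk_le_mk]
        exact min_le_min
          (Finset.sup_mono (Finset.range_subset_range.mpr (Nat.succ_le_succ huv))) le_rfl }

section

open Simplicial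

/-- The natural simplicial operator `X_a → X_b` with vertex map `f : [b] → [a]`. -/
def simpOp (X : SSet) (f : ℕ → ℕ) (a b : ℕ) (x : X _⦋a⦌) : X _⦋b⦌ :=
  X.map (mkHomF a b f).op x

/-- The natural simplicial operator `G_a → G_b` with vertex map `f : [b] → [a]`,
for a simplicial group `G`. -/
def grpOp (G : CategoryTheory.SimplicialObject GrpCat) (f : ℕ → ℕ) (a b : ℕ)
    (g : G _⦋a⦌) : G _⦋b⦌ :=
  (G.map (mkHomF a b f).op) g

/-- A twisting function `τ : X_{>0} → G`. -/
structure TwistingFn (X : SSet) (G : CategoryTheory.SimplicialObject GrpCat) where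
  map : ∀ n : ℕ, X _⦋n + 1⦌ → G _⦋n⦌
  d0 : ∀ (n : ℕ) (x : X _⦋n + 2⦌),
    grpOp G (deltaFun 0) (n + 1) n (map (n + 1) x)
      = (map n (simpOp X (deltaFun 0) (n + 2) (n + 1) x))⁻¹
        * map n (simpOp X (deltaFun 1) (n + 2) (n + 1) x)
  dk : ∀ (n k : ℕ) (x : X _⦋n + 2⦌), 0 < k → k < n + 2 →
    grpOp G (deltaFun k) (n + 1) n (map (n + 1) x)
      = map n (simpOp X (deltaFun (k + 1)) (n + 2) (n + 1) x)
  sk : ∀ (n k : ℕ) (x : X _⦋n + 1⦌), k < n + 1 →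
    grpOp G (sigmaFun k) n (n + 1) (map n x)
      = map (n + 1) (simpOp X (sigmaFun (k + 1)) (n + 1) (n + 2) x)
  s0 : ∀ (n : ℕ) (x : X _⦋n⦌), map n (simpOp X (sigmaFun 0) n (n + 1) x) = 1

/-- Szczarba's operator `Sz_i : X_{n+1} → G_n`. -/
def Sz {X : SSet} {G : CategoryTheory.SimplicialObject GrpCat} (τ : TwistingFn X G)
    (n : ℕ) (i : List ℕ) (x : X _⦋n + 1⦌) : G _⦋n⦌ :=
  ((List.range (n + 1)).map (fun r =>
    grpOp G (DFun i r) (n - r) n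
      ((τ.map (n - r) (simpOp X (fun t => t + r) (n + 1) ((n - r) + 1) x))⁻¹))).prod

/-- The group component of the operator `hatSz_i : X_n → X_n × G_n`. -/
def hatSzG {X : SSet} {G : CategoryTheory.SimplicialObject GrpCat} (τ : TwistingFn X G)
    (n : ℕ) (i : List ℕ) (x : X _⦋n⦌) : G _⦋n⦌ :=
  ((List.range n).map (fun r =>
    grpOp G (DFun i (r + 1)) (n - (r + 1)) n
      ((τ.map (n - (r + 1)) (simpOp X (fun t => t + r) n ((n - (r + 1)) + 1) x))⁻¹))).prod

/-- Szczarba's operator `hatSz_i : X_n → (X ×_τ G)_n = X_n × G_n`. -/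
def hatSz {X : SSet} {G : CategoryTheory.SimplicialObject GrpCat} (τ : TwistingFn X G)
    (n : ℕ) (i : List ℕ) (x : X _⦋n⦌) : X _⦋n⦌ × G _⦋n⦌ :=
  (simpOp X (DFun i 0) n n x, hatSzG τ n i x)

end

/-- The `r`-fold iterate of the zeroth face map of the twisted Cartesian
product `X ×_τ G`. -/
def twD0pow {X : SSet} {G : CategoryTheory.SimplicialObject GrpCat} (τ : TwistingFn X G) :
    (r : ℕ) → (m : ℕ) → X.obj (Opposite.op (SimplexCategory.mk (m + r))) ×
      (G.obj (Opposite.op (SimplexCategory.mk (m + r))) : Type _) →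
      X.obj (Opposite.op (SimplexCategory.mk m)) × (G.obj (Opposite.op (SimplexCategory.mk m)) : Type _)
  | 0, _, z => z
  | r + 1, m, z =>
      twD0pow τ r m
        (simpOp X (deltaFun 0) (m + r + 1) (m + r) z.1,
         τ.map (m + r) z.1 * grpOp G (deltaFun 0) (m + r + 1) (m + r) z.2)

/-- Vertex map of the iterated degeneracy `s_B` on a finite set `B`. -/
def degenFun (B : Finset ℕ) : ℕ → ℕ := fun t => t - (B.filter (fun b => b < t)).card

/-- The map `Φ : S_n × [n] → S_{n-1} × [n-1]`. -/
def Phi : List ℕ → ℕ → List ℕ × ℕ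
  | [], _ => ([], 0)
  | (i1 :: i'), p =>
    if p < i1 then ((i1 - 1) :: (Phi i' p).1, (Phi i' p).2 + 1)
    else if p = i1 ∨ p = i1 + 1 then (i', 0)
    else (i1 :: (Phi i' (p - 1)).1, (Phi i' (p - 1)).2 + 1)

open Simplicial

/-!
Write `Sz_i y` as the product over `r` of the factors `D_i^r σ(∂_0^r y)` and take `y = s_p x`.
For `r ≤ p` one has `∂_0^r s_p = s_{p-r} ∂_0^r`, and for `r ≥ p` one has `∂_0^{r+1} s_p = ∂_0^r`.
So the factor `r = p` is `σ(s_0 ∂_0^p x) = 1`, and for `r < p` the twisting-function axioms give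
`σ(s_{p-r} z) = s_{p-r-1} σ(z)`. It remains to commute `s_q` past the operators `D`:
`D_i^r s_{p-r-1} = s_q D_j^r` for `r < p` and `D_i^{r+1} = s_q D_j^r` for `r ≥ p`. Both follow
by induction on `i` along the recursive definitions of `D` and `Φ`, since deriving an operator
commutes with composition and turns `s_k` into `s_{k+1}`.
-/

lemma List.prod_map_range_succ_of_eq_one {M : Type*} [Monoid M] {f g : ℕ → M} {m p : ℕ}
    (hpm : p ≤ m) (hlt : ∀ r < p, f r = g r) (hp : f p = 1)
    (hgt : ∀ r, p ≤ r → r < m → f (r + 1) = g r) :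
    ((List.range (m + 1)).map f).prod = ((List.range m).map g).prod := by
  induction m, hpm using Nat.le_induction with
  | base =>
    rw [List.prod_range_succ, hp, mul_one]
    exact congrArg List.prod (List.map_congr_left fun r hr => hlt r (List.mem_range.1 hr))
  | succ m hpm ih =>
    rw [List.prod_range_succ, ih (fun r hpr hr => hgt r hpr (by omega)), List.prod_range_succ,
      hgt m hpm (by omega)]

/-- `f` is the vertex map of a morphism `[b] ⟶ [a]`; the arguments are in the order of
`mkHomF a b f`. -/
def IsVertexMap (a b : ℕ) (f : ℕ → ℕ) : Prop :=
  Monotone f ∧ Set.MapsTo f (Set.Iic b) (Set.Iic a)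

namespace IsVertexMap

variable {a b c : ℕ} {f g : ℕ → ℕ}

lemma comp (hf : IsVertexMap a b f) (hg : IsVertexMap b c g) : IsVertexMap a c (f ∘ g) :=
  ⟨hf.1.comp hg.1, hf.2.comp hg.2⟩

lemma derived (hf : IsVertexMap a b f) : IsVertexMap (a + 1) (b + 1) (derivedFun f) := by
  refine ⟨fun s t hst => ?_, fun t (ht : t ≤ b + 1) => ?_⟩
  · have := hf.1 (Nat.sub_le_sub_right hst 1)
    unfold derivedFun; split_ifs <;> omega
  · change derivedFun f t ≤ a + 1
    cases t with
    | zero => simp [derivedFun]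
    | succ t => simpa [derivedFun] using hf.2 (show t ≤ b by omega)

end IsVertexMap

lemma isVertexMap_id (a : ℕ) : IsVertexMap a a id :=
  ⟨monotone_id, Set.mapsTo_id _⟩

lemma isVertexMap_add {a b : ℕ} (r : ℕ) (h : b + r ≤ a) : IsVertexMap a b (· + r) :=
  ⟨fun _ _ hst => Nat.add_le_add_right hst r, fun t (ht : t ≤ b) => show t + r ≤ a by omega⟩

lemma isVertexMap_sigmaFun {a k : ℕ} (h : k ≤ a) : IsVertexMap a (a + 1) (sigmaFun k) := by
  refine ⟨fun s t hst => ?_, fun t (ht : t ≤ a + 1) => show sigmaFun k t ≤ a from ?_⟩ <;>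
    · unfold sigmaFun; split_ifs <;> omega

lemma isVertexMap_deltaFun (a j : ℕ) : IsVertexMap (a + 1) a (deltaFun j) := by
  refine ⟨fun s t hst => ?_, fun t (ht : t ≤ a) => show deltaFun j t ≤ a + 1 from ?_⟩ <;>
    · unfold deltaFun; split_ifs <;> omega

lemma derivedFun_comp (f g : ℕ → ℕ) : derivedFun (f ∘ g) = derivedFun f ∘ derivedFun g := by
  funext t; cases t <;> simp [derivedFun]

lemma derivedFun_sigmaFun (k : ℕ) : derivedFun (sigmaFun k) = sigmaFun (k + 1) := by
  funext t
  cases t <;> simp [derivedFun, sigmaFun]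
  split_ifs <;> omega

lemma derivedFun_sigmaFun_comp (k : ℕ) (f : ℕ → ℕ) :
    derivedFun (sigmaFun k ∘ f) = sigmaFun (k + 1) ∘ derivedFun f := by
  rw [derivedFun_comp, derivedFun_sigmaFun]

lemma derivedFun_comp_sigmaFun_succ (f : ℕ → ℕ) (k : ℕ) :
    derivedFun f ∘ sigmaFun (k + 1) = derivedFun (f ∘ sigmaFun k) := by
  rw [derivedFun_comp, derivedFun_sigmaFun]

lemma sigmaFun_zero_comp_derivedFun {f : ℕ → ℕ} (hf : f 0 = 0) :
    sigmaFun 0 ∘ derivedFun f = f ∘ sigmaFun 0 := by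
  funext t; cases t <;> simp [derivedFun, sigmaFun, hf]

section DFun

variable {i1 k : ℕ} (i' : List ℕ)

lemma DFun_cons_of_lt (h : k < i1) :
    DFun (i1 :: i') k = deltaFun (i1 - k) ∘ sigmaFun 0 ∘ derivedFun (DFun i' k) := by
  simp [DFun, h]

lemma DFun_cons_self : DFun (i1 :: i') i1 = derivedFun (DFun i' i1) := by
  simp [DFun]

lemma DFun_cons_succ_of_le (h : i1 ≤ k) :
    DFun (i1 :: i') (k + 1) = sigmaFun 0 ∘ derivedFun (DFun i' k) := by
  simp [DFun, show ¬ k + 1 < i1 by omega, show k + 1 ≠ i1 by omega]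

end DFun

lemma DFun_apply_zero (i : List ℕ) (k : ℕ) : DFun i k 0 = 0 := by
  cases i with
  | nil => rfl
  | cons i1 i' =>
    rcases lt_trichotomy k i1 with h | rfl | h
    · simp [DFun_cons_of_lt i' h, derivedFun, sigmaFun, deltaFun, h]
    · simp [DFun_cons_self, derivedFun]
    · obtain ⟨k, rfl⟩ : ∃ k', k = k' + 1 := ⟨k - 1, by omega⟩
      simp [DFun_cons_succ_of_le i' (Nat.le_of_lt_succ h), derivedFun, sigmaFun]

lemma memS_cons {l i1 : ℕ} {i' : List ℕ} :
    memS (l + 1) (l + 1) (i1 :: i') ↔ i1 ≤ l ∧ memS l l i' := by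
  constructor
  · rintro ⟨hlen, hb⟩
    refine ⟨by simpa using hb 0 (by omega), by simpa using hlen, fun t ht => ?_⟩
    have := hb (t + 1) (by omega)
    simp only [List.getD_cons_succ] at this
    omega
  · rintro ⟨h1, hlen, hb⟩
    refine ⟨by simpa using hlen, fun t ht => ?_⟩
    cases t with
    | zero => simpa using h1
    | succ u =>
      have := hb u (by omega)
      simp only [List.getD_cons_succ]
      omega

lemma isVertexMap_DFun {n a k : ℕ} {i : List ℕ} (hi : memS n n i) (h : a + k = n) :
    IsVertexMap a n (DFun i k) := by
  induction i generalizing n a k with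
  | nil =>
    obtain rfl : n = 0 := by simpa [memS] using hi.1.symm
    obtain ⟨rfl, rfl⟩ : a = 0 ∧ k = 0 := by omega
    exact isVertexMap_id 0
  | cons i1 i' ih =>
    obtain ⟨l, rfl⟩ : ∃ l, n = l + 1 := ⟨n - 1, by have := hi.1; simp at this; omega⟩
    obtain ⟨hi1, hi'⟩ := memS_cons.1 hi
    rcases lt_trichotomy k i1 with hk | rfl | hk
    · obtain ⟨a, rfl⟩ : ∃ a', a = a' + 1 := ⟨a - 1, by omega⟩
      rw [DFun_cons_of_lt i' hk]
      exact (isVertexMap_deltaFun _ _).comp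
        ((isVertexMap_sigmaFun (Nat.zero_le _)).comp (ih hi' (by omega)).derived)
    · obtain ⟨a, rfl⟩ : ∃ a', a = a' + 1 := ⟨a - 1, by omega⟩
      rw [DFun_cons_self]
      exact (ih hi' (by omega)).derived
    · obtain ⟨k, rfl⟩ : ∃ k', k = k' + 1 := ⟨k - 1, by omega⟩
      rw [DFun_cons_succ_of_le i' (by omega)]
      exact (isVertexMap_sigmaFun (Nat.zero_le _)).comp (ih hi' (by omega)).derived

section Phi

variable {i1 p : ℕ} (i' : List ℕ)

lemma Phi_cons_of_lt (h : p < i1) :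
    Phi (i1 :: i') p = ((i1 - 1) :: (Phi i' p).1, (Phi i' p).2 + 1) := by
  simp [Phi, h]

lemma Phi_cons_of_le_of_le (h1 : i1 ≤ p) (h2 : p ≤ i1 + 1) : Phi (i1 :: i') p = (i', 0) := by
  simp [Phi, show ¬ p < i1 by omega, show p = i1 ∨ p = i1 + 1 by omega]

lemma Phi_cons_of_gt (h : i1 + 1 < p) :
    Phi (i1 :: i') p = (i1 :: (Phi i' (p - 1)).1, (Phi i' (p - 1)).2 + 1) := by
  simp [Phi, show ¬ p < i1 by omega, show ¬ (p = i1 ∨ p = i1 + 1) by omega]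

end Phi

lemma Phi_mapsTo {n p : ℕ} {i : List ℕ} (hi : memS (n + 1) (n + 1) i) (hp : p ≤ n + 1) :
    memS n n (Phi i p).1 ∧ (Phi i p).2 ≤ n := by
  induction i generalizing n p with
  | nil => simp [memS] at hi
  | cons i1 i' ih =>
    obtain ⟨hi1, hi'⟩ := memS_cons.1 hi
    rcases lt_or_ge p i1 with h | h
    · obtain ⟨n, rfl⟩ : ∃ n', n = n' + 1 := ⟨n - 1, by omega⟩
      obtain ⟨hj, hq⟩ := ih hi' (p := p) (by omega)
      rw [Phi_cons_of_lt i' h]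
      exact ⟨memS_cons.2 ⟨by omega, hj⟩, by omega⟩
    rcases le_or_gt p (i1 + 1) with h' | h'
    · simpa [Phi_cons_of_le_of_le i' h h'] using hi'
    · obtain ⟨n, rfl⟩ : ∃ n', n = n' + 1 := ⟨n - 1, by omega⟩
      obtain ⟨hj, hq⟩ := ih hi' (p := p - 1) (by omega)
      rw [Phi_cons_of_gt i' h']
      exact ⟨memS_cons.2 ⟨by omega, hj⟩, by omega⟩

lemma DFun_Phi_comp_sigmaFun_of_lt {l p r : ℕ} {i : List ℕ} (hi : memS l l i) (hp : p ≤ l)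
    (hr : r < p) : DFun (Phi i p).1 r ∘ sigmaFun (Phi i p).2 = sigmaFun (p - r - 1) ∘ DFun i r := by
  induction i generalizing l p r with
  | nil =>
    obtain rfl : l = 0 := by simpa [memS] using hi.1.symm
    omega
  | cons i1 i' ih =>
    obtain ⟨l, rfl⟩ : ∃ l', l = l' + 1 := ⟨l - 1, by have := hi.1; simp at this; omega⟩
    obtain ⟨hi1, hi'⟩ := memS_cons.1 hi
    rcases lt_or_ge p i1 with hpi | hpi
    · simp only [Phi_cons_of_lt i' hpi, DFun_cons_of_lt _ (show r < i1 - 1 by omega),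
        DFun_cons_of_lt _ (show r < i1 by omega), Function.comp_assoc,
        derivedFun_comp_sigmaFun_succ, ih hi' (by omega) hr, derivedFun_sigmaFun_comp]
      funext t; simp only [Function.comp_apply, sigmaFun, deltaFun]; split_ifs <;> omega
    rcases le_or_gt p (i1 + 1) with hpi' | hpi'
    · rw [Phi_cons_of_le_of_le i' hpi hpi', ← sigmaFun_zero_comp_derivedFun (DFun_apply_zero i' r)]
      rcases lt_or_ge r i1 with hri | hri
      · rw [DFun_cons_of_lt i' hri]
        funext t; simp only [Function.comp_apply, sigmaFun, deltaFun]; split_ifs <;> omega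
      · obtain rfl : r = i1 := by omega
        rw [DFun_cons_self, show p - r - 1 = 0 by omega]
    · rw [Phi_cons_of_gt i' hpi']
      rcases lt_trichotomy r i1 with hri | rfl | hri
      · simp only [DFun_cons_of_lt _ hri, Function.comp_assoc,
          derivedFun_comp_sigmaFun_succ, ih hi' (p := p - 1) (r := r) (by omega) (by omega),
          derivedFun_sigmaFun_comp]
        funext t; simp only [Function.comp_apply, sigmaFun, deltaFun]; split_ifs <;> omega
      · simp only [DFun_cons_self, derivedFun_comp_sigmaFun_succ,
          ih hi' (p := p - 1) (r := r) (by omega) (by omega),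
          derivedFun_sigmaFun_comp]
        congr 2; omega
      · obtain ⟨r, rfl⟩ : ∃ r', r = r' + 1 := ⟨r - 1, by omega⟩
        simp only [DFun_cons_succ_of_le _ (Nat.le_of_lt_succ hri), Function.comp_assoc,
          derivedFun_comp_sigmaFun_succ, ih hi' (p := p - 1) (r := r) (by omega) (by omega),
          derivedFun_sigmaFun_comp]
        funext t; simp only [Function.comp_apply, sigmaFun]; split_ifs <;> omega

lemma DFun_Phi_comp_sigmaFun_of_le {l p r : ℕ} {i : List ℕ} (hi : memS l l i) (hpr : p ≤ r)
    (hr : r < l) : DFun (Phi i p).1 r ∘ sigmaFun (Phi i p).2 = DFun i (r + 1) := by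
  induction i generalizing l p r with
  | nil =>
    obtain rfl : l = 0 := by simpa [memS] using hi.1.symm
    omega
  | cons i1 i' ih =>
    obtain ⟨l, rfl⟩ : ∃ l', l = l' + 1 := ⟨l - 1, by have := hi.1; simp at this; omega⟩
    obtain ⟨hi1, hi'⟩ := memS_cons.1 hi
    rcases lt_or_ge p i1 with hpi | hpi
    · rw [Phi_cons_of_lt i' hpi]
      rcases lt_trichotomy (r + 1) i1 with hri | rfl | hri
      · simp only [DFun_cons_of_lt _ (show r < i1 - 1 by omega), DFun_cons_of_lt _ hri,
          Function.comp_assoc, derivedFun_comp_sigmaFun_succ, ih hi' hpr (by omega)]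
        congr 2; omega
      · simp only [Nat.add_sub_cancel, DFun_cons_self, derivedFun_comp_sigmaFun_succ,
          ih hi' hpr (by omega)]
      · obtain ⟨r, rfl⟩ : ∃ r', r = r' + 1 := ⟨r - 1, by omega⟩
        simp only [DFun_cons_succ_of_le _ (show i1 - 1 ≤ r by omega),
          DFun_cons_succ_of_le _ (show i1 ≤ r + 1 by omega), Function.comp_assoc,
          derivedFun_comp_sigmaFun_succ, ih hi' (show p ≤ r by omega) (by omega)]
    rcases le_or_gt p (i1 + 1) with hpi' | hpi'
    · rw [Phi_cons_of_le_of_le i' hpi hpi', DFun_cons_succ_of_le i' (by omega),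
        sigmaFun_zero_comp_derivedFun (DFun_apply_zero i' r)]
    · obtain ⟨r, rfl⟩ : ∃ r', r = r' + 1 := ⟨r - 1, by omega⟩
      simp only [Phi_cons_of_gt i' hpi', DFun_cons_succ_of_le _ (show i1 ≤ r by omega),
        DFun_cons_succ_of_le _ (show i1 ≤ r + 1 by omega), Function.comp_assoc,
        derivedFun_comp_sigmaFun_succ, ih hi' (show p - 1 ≤ r by omega) (by omega)]

section Simplicial

variable {a b c : ℕ} {f g : ℕ → ℕ}

lemma mkHomF_apply (hf : IsVertexMap a b f) (t : Fin (b + 1)) :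
    ((mkHomF a b f).toOrderHom t : ℕ) = f t := by
  have hsup : (Finset.range (t.1 + 1)).sup f = f t :=
    le_antisymm (Finset.sup_le fun u hu => hf.1 (Nat.lt_succ_iff.mp (Finset.mem_range.mp hu)))
      (Finset.le_sup (Finset.mem_range.mpr t.1.lt_succ_self))
  change min ((Finset.range (t.1 + 1)).sup f) a = f t
  rw [hsup, min_eq_left (hf.2 (Nat.lt_succ_iff.mp t.2))]

lemma mkHomF_comp (hf : IsVertexMap a b f) (hg : IsVertexMap b c g) :
    mkHomF b c g ≫ mkHomF a b f = mkHomF a c (f ∘ g) := by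
  ext t
  change ((mkHomF a b f).toOrderHom ((mkHomF b c g).toOrderHom t) : ℕ) = _
  rw [mkHomF_apply hf, mkHomF_apply hg, mkHomF_apply (hf.comp hg), Function.comp_apply]

lemma simpOp_simpOp (X : SSet) (hf : IsVertexMap a b f) (hg : IsVertexMap b c g) (x : X _⦋a⦌) :
    simpOp X g b c (simpOp X f a b x) = simpOp X (f ∘ g) a c x := by
  simp only [simpOp, ← mkHomF_comp hf hg, op_comp, Functor.map_comp_apply]

lemma grpOp_grpOp (G : SimplicialObject GrpCat) (hf : IsVertexMap a b f)
    (hg : IsVertexMap b c g) (z : G _⦋a⦌) :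
    grpOp G g b c (grpOp G f a b z) = grpOp G (f ∘ g) a c z := by
  simp only [grpOp, ← mkHomF_comp hf hg, op_comp, G.map_comp]
  rfl

lemma grpOp_inv (G : SimplicialObject GrpCat) (f : ℕ → ℕ) (a b : ℕ) (z : G _⦋a⦌) :
    grpOp G f a b z⁻¹ = (grpOp G f a b z)⁻¹ :=
  map_inv _ _

lemma grpOp_one (G : SimplicialObject GrpCat) (f : ℕ → ℕ) (a b : ℕ) : grpOp G f a b 1 = 1 :=
  map_one _

lemma grpOp_list_prod (G : SimplicialObject GrpCat) (f : ℕ → ℕ) (a b : ℕ)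
    (L : List (G _⦋a⦌)) : grpOp G f a b L.prod = (L.map (grpOp G f a b)).prod :=
  map_list_prod _ _

end Simplicial

lemma simpOp_add_simpOp_sigmaFun_of_le (X : SSet) {m a p r : ℕ} (hm : a + r = m) (hrp : r ≤ p)
    (hpm : p ≤ m) (x : X _⦋m⦌) :
    simpOp X (· + r) (m + 1) (a + 1) (simpOp X (sigmaFun p) m (m + 1) x)
      = simpOp X (sigmaFun (p - r)) a (a + 1) (simpOp X (· + r) m a x) := by
  rw [simpOp_simpOp X (isVertexMap_sigmaFun hpm) (isVertexMap_add r (by omega)),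
    simpOp_simpOp X (isVertexMap_add r hm.le) (isVertexMap_sigmaFun (by omega))]
  congr 1
  funext t; simp only [Function.comp_apply, sigmaFun]; split_ifs <;> omega

lemma simpOp_add_succ_simpOp_sigmaFun_of_le (X : SSet) {m b p r : ℕ} (hm : b + r = m)
    (hpr : p ≤ r) (hpm : p ≤ m) (x : X _⦋m⦌) :
    simpOp X (· + (r + 1)) (m + 1) b (simpOp X (sigmaFun p) m (m + 1) x)
      = simpOp X (· + r) m b x := by
  rw [simpOp_simpOp X (isVertexMap_sigmaFun hpm) (isVertexMap_add (r + 1) (by omega))]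
  congr 1
  funext t; simp only [Function.comp_apply, sigmaFun]; split_ifs <;> omega

section Twisting

variable {X : SSet} {G : SimplicialObject GrpCat}

lemma TwistingFn.map_simpOp_sigmaFun_succ (τ : TwistingFn X G) {a k : ℕ} (hk : k ≤ a)
    (y : X _⦋a + 1⦌) :
    τ.map (a + 1) (simpOp X (sigmaFun (k + 1)) (a + 1) (a + 1 + 1) y)
      = grpOp G (sigmaFun k) a (a + 1) (τ.map a y) :=
  (τ.sk a k y (Nat.lt_succ_of_le hk)).symm

/-- The factor `D_i^r σ(∂_0^r x)` of `Sz_i x`. -/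
def szFactor (τ : TwistingFn X G) (n : ℕ) (i : List ℕ) (x : X _⦋n + 1⦌) (r : ℕ) : G _⦋n⦌ :=
  grpOp G (DFun i r) (n - r) n
    ((τ.map (n - r) (simpOp X (fun t => t + r) (n + 1) ((n - r) + 1) x))⁻¹)

lemma Sz_eq_prod_szFactor (τ : TwistingFn X G) (n : ℕ) (i : List ℕ) (x : X _⦋n + 1⦌) :
    Sz τ n i x = ((List.range (n + 1)).map (szFactor τ n i x)).prod :=
  rfl

variable (τ : TwistingFn X G) {n p : ℕ} {i : List ℕ} (x : X _⦋n + 1⦌)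

lemma szFactor_simpOp_sigmaFun_of_lt (hi : memS (n + 1) (n + 1) i) (hp : p ≤ n + 1) {r : ℕ}
    (hr : r < p) :
    szFactor τ (n + 1) i (simpOp X (sigmaFun p) (n + 1) (n + 2) x) r
      = grpOp G (sigmaFun (Phi i p).2) n (n + 1) (szFactor τ n (Phi i p).1 x r) := by
  obtain ⟨hj, hq⟩ := Phi_mapsTo hi hp
  unfold szFactor
  rw [show n + 1 - r = n - r + 1 by omega,
    simpOp_add_simpOp_sigmaFun_of_le X (show n - r + 1 + r = n + 1 by omega) hr.le hp,
    show p - r = p - r - 1 + 1 by omega, τ.map_simpOp_sigmaFun_succ (by omega), grpOp_inv,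
    grpOp_grpOp G (isVertexMap_sigmaFun (by omega)) (isVertexMap_DFun hi (k := r) (by omega)),
    ← DFun_Phi_comp_sigmaFun_of_lt hi hp hr,
    ← grpOp_grpOp G (isVertexMap_DFun hj (k := r) (by omega)) (isVertexMap_sigmaFun hq)]
  simp only [grpOp_inv]

lemma szFactor_simpOp_sigmaFun_self (hp : p ≤ n + 1) :
    szFactor τ (n + 1) i (simpOp X (sigmaFun p) (n + 1) (n + 2) x) p = 1 := by
  unfold szFactor
  rw [simpOp_add_simpOp_sigmaFun_of_le X (show n + 1 - p + p = n + 1 by omega) le_rfl hp,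
    Nat.sub_self, τ.s0, inv_one, grpOp_one]

lemma szFactor_simpOp_sigmaFun_succ (hi : memS (n + 1) (n + 1) i) (hp : p ≤ n + 1) {r : ℕ}
    (hpr : p ≤ r) (hr : r < n + 1) :
    szFactor τ (n + 1) i (simpOp X (sigmaFun p) (n + 1) (n + 2) x) (r + 1)
      = grpOp G (sigmaFun (Phi i p).2) n (n + 1) (szFactor τ n (Phi i p).1 x r) := by
  obtain ⟨hj, hq⟩ := Phi_mapsTo hi hp
  unfold szFactor
  rw [show n + 1 - (r + 1) = n - r by omega,
    simpOp_add_succ_simpOp_sigmaFun_of_le X (show n - r + 1 + r = n + 1 by omega) hpr hp,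
    ← DFun_Phi_comp_sigmaFun_of_le hi hpr hr,
    ← grpOp_grpOp G (isVertexMap_DFun hj (k := r) (by omega)) (isVertexMap_sigmaFun hq)]

end Twisting

/-- For a twisting function `τ : X_{>0} → G`, an `n`-simplex
`x` with `n ≥ 1` (here `x ∈ X_{n+1}` with `n ≥ 0`), `0 ≤ p ≤ n+1`, `i ∈ S_{n+1}`
and `(j, q) = Φ(i, p)` one has `Sz_i (s_p x) = s_q (Sz_j x)` in `G_{n+1}`. -/
theorem szczarba_Sz_degeneracy (X : SSet) (G : CategoryTheory.SimplicialObject GrpCat)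
    (τ : TwistingFn X G) (n : ℕ) (p : ℕ) (hp : p ≤ n + 1)
    (i : List ℕ) (hi : memS (n + 1) (n + 1) i) (x : X _⦋n + 1⦌) :
    Sz τ (n + 1) i (simpOp X (sigmaFun p) (n + 1) (n + 2) x)
      = grpOp G (sigmaFun (Phi i p).2) n (n + 1) (Sz τ n (Phi i p).1 x) := by
  rw [Sz_eq_prod_szFactor, Sz_eq_prod_szFactor, grpOp_list_prod, List.map_map]
  exact List.prod_map_range_succ_of_eq_one hp
    (fun r hr => szFactor_simpOp_sigmaFun_of_lt τ x hi hp hr)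
    (szFactor_simpOp_sigmaFun_self τ x hp)
    (fun r hpr hr => szFactor_simpOp_sigmaFun_succ τ x hi hp hpr hr)
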